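/- arXiv:2501.06685 — 2 statements merged into one kernel-verified Lean document; each statement's English description precedes it below -/
import Mathlib

section
/- The Shapley value of attribute a_j in the union-cardinality game admits the closed form φ(a_j) = Σ_{x ∈ E(a_j)} 1 / |{k ∈ A : x ∈ E(a_k)}|, where the Shapley value is defined as the average over all permutations π of A of the marginal contribution v(C_π(a_j) ∪ {a_j}) − v(C_π(a_j)), with C_π(a_j) the set of predecessors of a_j in π. -/
private lemma swap_mem_of_mem {α : Type*} [DecidableEq α] {T : Finset α} {a t b : α}
    (ha : a ∈ T) (ht : t ∈ T) (hb : b ∈ T) : Equiv.swap a t b ∈ T := by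
  rw [Equiv.swap_apply_def]
  split_ifs <;> assumption

private lemma count_min {α : Type*} [Fintype α] [DecidableEq α] (T : Finset α) (a : α)
    (ha : a ∈ T) :
    T.card * (Finset.univ.filter
      (fun π : α ≃ Fin (Fintype.card α) => ∀ b ∈ T, π a ≤ π b)).card =
    Nat.factorial (Fintype.card α) := by
  classical
  set m := Fintype.card α with hm
  set F : α → Finset (α ≃ Fin m) :=
    fun t => Finset.univ.filter (fun π => ∀ b ∈ T, π t ≤ π b) with hF
  have hcards : ∀ t ∈ T, (F t).card = (F a).card := by
    intro t ht
    apply Finset.card_bij' (fun π _ => (Equiv.swap a t).trans π)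
      (fun π _ => (Equiv.swap a t).trans π)
    · intro π hπ
      simp only [hF, Finset.mem_filter, Finset.mem_univ, true_and] at hπ ⊢
      intro b hb
      simp only [Equiv.trans_apply, Equiv.swap_apply_left]
      exact hπ _ (swap_mem_of_mem ha ht hb)
    · intro π hπ
      simp only [hF, Finset.mem_filter, Finset.mem_univ, true_and] at hπ ⊢
      intro b hb
      simp only [Equiv.trans_apply, Equiv.swap_apply_right]
      exact hπ _ (swap_mem_of_mem ha ht hb)
    · intro π _; ext x; simp [Equiv.swap_apply_self]
    · intro π _; ext x; simp [Equiv.swap_apply_self]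
  have hcover : (Finset.univ : Finset (α ≃ Fin m)) = T.biUnion F := by
    ext π
    simp only [Finset.mem_univ, true_iff, Finset.mem_biUnion, hF, Finset.mem_filter,
      Finset.mem_univ, true_and]
    obtain ⟨t, ht, hmin⟩ := T.exists_min_image (fun b => π b) ⟨a, ha⟩
    exact ⟨t, ht, hmin⟩
  have hdisj : ∀ x ∈ T, ∀ y ∈ T, x ≠ y → Disjoint (F x) (F y) := by
    intro x hx y hy hxy
    rw [Finset.disjoint_left]
    intro π hπx hπy
    simp only [hF, Finset.mem_filter, Finset.mem_univ, true_and] at hπx hπy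
    exact hxy (π.injective (le_antisymm (hπx _ hy) (hπy _ hx)))
  have hb : (Finset.univ : Finset (α ≃ Fin m)).card = T.card * (F a).card := by
    rw [hcover, Finset.card_biUnion hdisj, Finset.sum_congr rfl hcards,
      Finset.sum_const, smul_eq_mul]
  have huniv : (Finset.univ : Finset (α ≃ Fin m)).card = Nat.factorial m := by
    rw [Finset.card_univ, Fintype.card_equiv (Fintype.equivFin α)]
  rw [← hb, huniv]

/-- Closed form for the Shapley value of an attribute in the union-cardinality game:
the average over all orders of the attributes of the marginal contribution of `a`
equals `Σ_{x ∈ E(a)} 1 / |{k : x ∈ E(k)}|`. -/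
theorem tab_shapley_closed_form {α X : Type*} [Fintype α] [DecidableEq α] [DecidableEq X]
    (E : α → Finset X) (a : α) :
    (1 / (Nat.factorial (Fintype.card α) : ℚ)) *
      ∑ π : α ≃ Fin (Fintype.card α),
        ((((insert a (Finset.univ.filter fun b => π b < π a)).biUnion E).card : ℚ) -
          (((Finset.univ.filter fun b => π b < π a).biUnion E).card : ℚ)) =
    ∑ x ∈ E a, (1 : ℚ) / ((Finset.univ.filter fun k => x ∈ E k).card : ℚ) := by
  classical
  have hfac : (Nat.factorial (Fintype.card α) : ℚ) ≠ 0 := by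
    exact_mod_cast (Nat.factorial_pos _).ne'
  -- Step 1: rewrite each marginal contribution
  have hmarg : ∀ π : α ≃ Fin (Fintype.card α),
      ((((insert a (Finset.univ.filter fun b => π b < π a)).biUnion E).card : ℚ) -
        (((Finset.univ.filter fun b => π b < π a).biUnion E).card : ℚ)) =
      ∑ x ∈ E a, if ∀ b, x ∈ E b → π a ≤ π b then (1 : ℚ) else 0 := by
    intro π
    set S := Finset.univ.filter fun b => π b < π a with hS
    have h1 : (insert a S).biUnion E = E a ∪ S.biUnion E := Finset.biUnion_insert
    have h2 : (E a \ S.biUnion E).card + (S.biUnion E).card = (E a ∪ S.biUnion E).card :=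
      Finset.card_sdiff_add_card ..
    have h3 : ((insert a S).biUnion E).card =
        (E a \ S.biUnion E).card + (S.biUnion E).card := by rw [h1, h2]
    rw [h3]
    push_cast
    ring_nf
    have h4 : (E a \ S.biUnion E) = (E a).filter (fun x => ∀ b, x ∈ E b → π a ≤ π b) := by
      ext x
      simp only [Finset.mem_sdiff, Finset.mem_filter, Finset.mem_biUnion, hS,
        Finset.mem_univ, true_and, not_exists, not_and]
      constructor
      · rintro ⟨hx, h⟩
        refine ⟨hx, fun b hbx => ?_⟩
        by_contra hle
        exact h b (lt_of_not_ge hle) hbx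
      · rintro ⟨hx, h⟩
        exact ⟨hx, fun b hlt hbx => absurd (h b hbx) (not_le_of_gt hlt)⟩
    rw [h4, Finset.card_filter]
    push_cast
    rfl
  rw [Finset.sum_congr rfl (fun π _ => hmarg π), Finset.sum_comm]
  rw [Finset.mul_sum]
  refine Finset.sum_congr rfl (fun x hx => ?_)
  rw [Finset.sum_boole]
  have hmem : a ∈ Finset.univ.filter (fun k => x ∈ E k) := by
    simp [hx]
  have hcount := count_min (Finset.univ.filter (fun k => x ∈ E k)) a hmem
  have hcond : (Finset.univ.filter
      (fun π : α ≃ Fin (Fintype.card α) => ∀ b, x ∈ E b → π a ≤ π b)) =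
      (Finset.univ.filter
      (fun π : α ≃ Fin (Fintype.card α) =>
        ∀ b ∈ Finset.univ.filter (fun k => x ∈ E k), π a ≤ π b)) := by
    apply Finset.filter_congr
    intro π _
    simp
  have hn : ((Finset.univ.filter (fun k => x ∈ E k)).card : ℚ) ≠ 0 := by
    exact_mod_cast Finset.card_ne_zero_of_mem hmem
  have : ((Finset.univ.filter (fun k => x ∈ E k)).card : ℚ) *
      ((Finset.univ.filter (fun π : α ≃ Fin (Fintype.card α) =>
        ∀ b ∈ Finset.univ.filter (fun k => x ∈ E k), π a ≤ π b)).card : ℚ) =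
      (Nat.factorial (Fintype.card α) : ℚ) := by exact_mod_cast hcount
  rw [← hcond] at this
  field_simp
  linarith [this]
end

section
/- In the union-cardinality game, the probability (over a uniformly random permutation π of the m attributes) that a fixed record x ∈ E(a_j) is not covered by the predecessors of a_j equals 1/|{k : x ∈ E(k)}|; i.e., the number of permutations π with x ∉ ⋃_{b ∈ C_π(a_j)} E(b) equals m!/|{k : x ∈ E(k)}|. -/
/-- For a fixed record `x ∈ E(a_j)` lying in exactly `d` evidence sets, the number of
permutations of the `m` attributes in which `x` is not covered by the predecessors of
`a_j` equals `m! / d`. -/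
theorem uncovered_permutation_count {α X : Type*} [Fintype α] [DecidableEq α] [DecidableEq X]
    (E : α → Finset X) (a : α) (x : X) (hx : x ∈ E a)
    (d : ℕ) (hd : d = (Finset.univ.filter fun k => x ∈ E k).card) (hd1 : 1 ≤ d) :
    ((Finset.univ : Finset (α ≃ Fin (Fintype.card α))).filter fun π =>
        x ∉ (Finset.univ.filter fun b => π b < π a).biUnion E).card =
      Nat.factorial (Fintype.card α) / d := by
  classical
  set m := Fintype.card α with hm
  set S : Finset α := Finset.univ.filter fun k => x ∈ E k with hS
  have haS : a ∈ S := by simp [hS, hx]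
  -- the uncovered condition is equivalent to `a` being π-minimal in `S`
  have hcond : ∀ π : α ≃ Fin m,
      (x ∉ (Finset.univ.filter fun b => π b < π a).biUnion E) ↔ ∀ k ∈ S, π a ≤ π k := by
    intro π
    simp only [Finset.mem_biUnion, Finset.mem_filter, Finset.mem_univ, true_and,
      not_exists, not_and]
    constructor
    · intro h k hk
      by_contra hlt
      exact h k (lt_of_not_ge hlt) (by simpa [hS] using hk)
    · intro h b hb hxb
      exact absurd (h b (by simp [hS, hxb])) (not_le.mpr hb)
  set A : α → Finset (α ≃ Fin m) :=
    fun s => Finset.univ.filter fun π => ∀ k ∈ S, π s ≤ π k with hA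
  -- all fibers have the same cardinality
  have hcards : ∀ s ∈ S, (A s).card = (A a).card := by
    intro s hs
    have hswapS : ∀ k ∈ S, Equiv.swap a s k ∈ S := by
      intro k hk
      rcases eq_or_ne k a with rfl | h1
      · simpa [Equiv.swap_apply_left] using hs
      rcases eq_or_ne k s with rfl | h2
      · simpa [Equiv.swap_apply_right] using haS
      · simpa [Equiv.swap_apply_of_ne_of_ne h1 h2] using hk
    refine Finset.card_bij' (fun π _ => (Equiv.swap a s).trans π)
      (fun π _ => (Equiv.swap a s).trans π) ?_ ?_ ?_ ?_
    · intro π hπ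
      simp only [hA, Finset.mem_filter, Finset.mem_univ, true_and, Equiv.trans_apply] at hπ ⊢
      intro k hk
      have := hπ (Equiv.swap a s k) (hswapS k hk)
      simpa [Equiv.swap_apply_left] using this
    · intro π hπ
      simp only [hA, Finset.mem_filter, Finset.mem_univ, true_and, Equiv.trans_apply] at hπ ⊢
      intro k hk
      have := hπ (Equiv.swap a s k) (hswapS k hk)
      simpa [Equiv.swap_apply_right] using this
    · intro π _; ext k; simp [Equiv.trans_apply, Equiv.swap_apply_self]
    · intro π _; ext k; simp [Equiv.trans_apply, Equiv.swap_apply_self]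
  -- the fibers partition all permutations
  have hpart : (Finset.univ : Finset (α ≃ Fin m)) = S.biUnion A := by
    ext π
    simp only [Finset.mem_univ, Finset.mem_biUnion, true_iff, hA, Finset.mem_filter, true_and]
    obtain ⟨s, hs, hmin⟩ := Finset.exists_min_image S (fun k => π k) ⟨a, haS⟩
    exact ⟨s, hs, hmin⟩
  have hdisj : ∀ s ∈ S, ∀ t ∈ S, s ≠ t → Disjoint (A s) (A t) := by
    intro s hs t ht hst
    rw [Finset.disjoint_left]
    intro π hπs hπt
    simp only [hA, Finset.mem_filter, Finset.mem_univ, true_and] at hπs hπt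
    exact hst (π.injective (le_antisymm (hπs t ht) (hπt s hs)))
  have hcount : Nat.factorial m = d * (A a).card := by
    have h1 : (Finset.univ : Finset (α ≃ Fin m)).card = Nat.factorial m := by
      rw [Finset.card_univ, Fintype.card_equiv (Fintype.equivFinOfCardEq rfl)]
    calc Nat.factorial m = (S.biUnion A).card := by rw [← hpart, h1]
      _ = ∑ s ∈ S, (A s).card := Finset.card_biUnion hdisj
      _ = ∑ _s ∈ S, (A a).card := Finset.sum_congr rfl hcards
      _ = d * (A a).card := by rw [Finset.sum_const, smul_eq_mul, hd]
  have hgoal : ((Finset.univ : Finset (α ≃ Fin m)).filter fun π =>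
      x ∉ (Finset.univ.filter fun b => π b < π a).biUnion E) = A a := by
    apply Finset.filter_congr
    intro π _
    simpa using hcond π
  rw [hgoal, hcount, Nat.mul_div_cancel_left _ hd1]
end
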